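/- Let u be a non-trivial plane wave solution on Minkowski space of the polarized Maxwell equation *du = αi·du (α = ±1), and define the torsion tensor T_{λμν}(x) := Re(u_λ(x)(du)_{μν}(x)). Then T is purely tensor: its trace part vanishes, T^λ_{λν} = 0 for all ν, and its axial part vanishes, T_{λμν} ε^{λμνκ} = 0 for all κ. -/

import Mathlib

set_option maxHeartbeats 1000000

noncomputable section
open Complex Finset

/-- The Minkowski metric `diag(+1,-1,-1,-1)` on `ℝ⁴`. -/
def gR (μ ν : Fin 4) : ℝ := if μ = ν then (if μ = (0 : Fin 4) then 1 else -1) else 0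

/-- The value of an index as a real number. -/
def fv (a : Fin 4) : ℝ := (a : ℕ)

/-- The totally antisymmetric symbol `ε` with `ε₀₁₂₃ = +1`. -/
def eps (a b c d : Fin 4) : ℝ :=
  ((fv b - fv a) * (fv c - fv a) * (fv d - fv a) *
    (fv c - fv b) * (fv d - fv b) * (fv d - fv c)) / 12

/-- The Hodge star of an antisymmetric rank-2 (lower-index) tensor:
`(*L)_{μν} = (1/2) L^{κλ} ε_{κλμν}`, indices raised with the Minkowski metric. -/
def hodge (L : Fin 4 → Fin 4 → ℂ) (μ ν : Fin 4) : ℂ :=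
  (1/2) * ∑ κ : Fin 4, ∑ l : Fin 4, ((gR κ κ * gR l l * eps κ l μ ν : ℝ) : ℂ) * L κ l

/-- The partial derivative `∂_μ` of a function on Minkowski space `ℝ⁴`. -/
def pd {E : Type*} [NormedAddCommGroup E] [NormedSpace ℝ E]
    (μ : Fin 4) (f : (Fin 4 → ℝ) → E) (x : Fin 4 → ℝ) : E :=
  fderiv ℝ f x (Pi.single μ 1)

/-- The exterior derivative of a complex vector field: `(du)_{μν} = ∂_μ u_ν − ∂_ν u_μ`. -/
def dEx (u : (Fin 4 → ℝ) → Fin 4 → ℂ) (x : Fin 4 → ℝ) (μ ν : Fin 4) : ℂ :=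
  pd μ (fun y => u y ν) x - pd ν (fun y => u y μ) x

/-- `u` is a plane wave: `u(x) = w e^{−i k·x}` with constant `w` and constant real `k ≠ 0`. -/
def IsPlaneWave (u : (Fin 4 → ℝ) → Fin 4 → ℂ) : Prop :=
  ∃ (w : Fin 4 → ℂ) (k : Fin 4 → ℝ), k ≠ 0 ∧
    ∀ x μ, u x μ = w μ * Complex.exp (-Complex.I * ∑ ρ : Fin 4, ((k ρ : ℂ) * (x ρ : ℂ)))


/-- The torsion of the spacetimes of Theorem 2: `T_{λμν}(x) = Re(u_λ(x) (du)_{μν}(x))`. -/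
def Twave (u : (Fin 4 → ℝ) → Fin 4 → ℂ) (x : Fin 4 → ℝ) (lam μ ν : Fin 4) : ℝ :=
  (u x lam * dEx u x μ ν).re

/- ## Auxiliary lemmas -/

lemma fv0' : fv 0 = 0 := by rw [fv, show ((0:Fin 4):ℕ) = 0 from rfl]; norm_num
lemma fv1' : fv 1 = 1 := by rw [fv, show ((1:Fin 4):ℕ) = 1 from rfl]; norm_num
lemma fv2' : fv 2 = 2 := by rw [fv, show ((2:Fin 4):ℕ) = 2 from rfl]; norm_num
lemma fv3' : fv 3 = 3 := by rw [fv, show ((3:Fin 4):ℕ) = 3 from rfl]; norm_num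

lemma pd_wave (w : ℂ) (k : Fin 4 → ℝ) (x : Fin 4 → ℝ) (μ : Fin 4) :
    pd μ (fun y => w * Complex.exp (-Complex.I * ∑ ρ : Fin 4, ((k ρ : ℂ) * (y ρ : ℂ)))) x
    = w * Complex.exp (-Complex.I * ∑ ρ : Fin 4, ((k ρ : ℂ) * (x ρ : ℂ))) * (-Complex.I * k μ) := by
  set D : (Fin 4 → ℝ) →L[ℝ] ℝ := ∑ ρ : Fin 4, k ρ • ContinuousLinearMap.proj ρ with hDdef
  have hD : ∀ y, D y = ∑ ρ : Fin 4, k ρ * y ρ := by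
    intro y; simp [hDdef, ContinuousLinearMap.sum_apply]
  set L : (Fin 4 → ℝ) →L[ℝ] ℂ := (-Complex.I) • (Complex.ofRealCLM.comp D) with hLdef
  have hL : ∀ y, L y = -Complex.I * ∑ ρ : Fin 4, ((k ρ : ℂ) * (y ρ : ℂ)) := by
    intro y
    have : ((D y : ℝ) : ℂ) = ∑ ρ : Fin 4, ((k ρ : ℂ) * (y ρ : ℂ)) := by
      rw [hD]; push_cast; ring
    simp [hLdef, this]
  have h1 : HasFDerivAt (fun y => w * Complex.exp (L y)) (w • (Complex.exp (L x) • L)) x :=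
    (L.hasFDerivAt.cexp).const_mul w
  have h2 : (fun y : Fin 4 → ℝ => w * Complex.exp (-Complex.I * ∑ ρ : Fin 4, ((k ρ : ℂ) * (y ρ : ℂ))))
      = fun y => w * Complex.exp (L y) := by
    funext y; rw [hL]
  have hsingle : D (Pi.single μ 1) = k μ := by
    rw [hD]; simp [Pi.single_apply]
  rw [pd, h2, h1.fderiv]
  simp [hL x, hLdef, hsingle]
  rw [hD]; push_cast
  ring

lemma hodge_contract (A B : Fin 4 → ℂ) (ν : Fin 4) :
    ∑ μ : Fin 4, (gR μ μ : ℂ) * B μ * hodge (fun a b => A a * B b - A b * B a) μ ν = 0 := by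
  fin_cases ν <;>
  · simp only [hodge, Fin.sum_univ_four, gR, eps, fv0', fv1', fv2', fv3', Fin.reduceEq,
      if_true, if_false, ite_true, ite_false, Fin.isValue]
    norm_num
    ring

lemma axial_alg (A B : Fin 4 → ℂ) (κ : Fin 4) :
    ∑ l : Fin 4, ∑ μ : Fin 4, ∑ ν : Fin 4,
      ((gR l l : ℂ) * gR μ μ * gR ν ν) * B l * (A μ * B ν - A ν * B μ) * (eps l μ ν κ : ℝ) = 0 := by
  fin_cases κ <;>
  · simp only [Fin.sum_univ_four, gR, eps, fv0', fv1', fv2', fv3', Fin.reduceEq,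
      if_true, if_false, ite_true, ite_false, Fin.isValue]
    norm_num
    ring

/-- for a non-trivial plane wave solution `u` of `*du = α i du`, the torsion
`T_{λμν} = Re(u_λ (du)_{μν})` is purely tensor: its trace part `T^λ_{λν}` and its axial
part `T_{λμν} ε^{λμνκ}` both vanish. -/
theorem torsion_purely_tensor (u : (Fin 4 → ℝ) → Fin 4 → ℂ)
    (hpw : IsPlaneWave u)
    (hnt : ¬ (∀ x μ ν, dEx u x μ ν = 0))
    (α : ℝ) (hα : α = 1 ∨ α = -1)
    (hpol : ∀ x μ ν, hodge (dEx u x) μ ν = (α : ℂ) * Complex.I * dEx u x μ ν) :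
    (∀ x ν, ∑ lam : Fin 4, gR lam lam * Twave u x lam lam ν = 0) ∧
    (∀ x κ, ∑ lam : Fin 4, ∑ μ : Fin 4, ∑ ν : Fin 4,
        gR lam lam * gR μ μ * gR ν ν * gR κ κ * Twave u x lam μ ν * eps lam μ ν κ = 0) := by
  obtain ⟨w, k, hk, hu⟩ := hpw
  set E : (Fin 4 → ℝ) → ℂ :=
    fun x => Complex.exp (-Complex.I * ∑ ρ : Fin 4, ((k ρ : ℂ) * (x ρ : ℂ))) with hE
  have hEne : ∀ x, E x ≠ 0 := fun x => Complex.exp_ne_zero _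
  have key : ∀ x μ ν, dEx u x μ ν
      = -Complex.I * ((k μ : ℂ) * w ν - (k ν : ℂ) * w μ) * E x := by
    intro x μ ν
    have h1 : (fun y => u y ν)
        = fun y => w ν * Complex.exp (-Complex.I * ∑ ρ : Fin 4, ((k ρ : ℂ) * (y ρ : ℂ))) := by
      funext y; exact hu y ν
    have h2 : (fun y => u y μ)
        = fun y => w μ * Complex.exp (-Complex.I * ∑ ρ : Fin 4, ((k ρ : ℂ) * (y ρ : ℂ))) := by
      funext y; exact hu y μ
    rw [dEx, h1, h2, pd_wave, pd_wave, hE]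
    ring
  have hα' : (α : ℂ) ≠ 0 := by rcases hα with h | h <;> simp [h]
  -- the contracted polarization identity :  w^μ (du)_{μν} = 0
  have hF : ∀ ν : Fin 4, ∑ μ : Fin 4,
      (gR μ μ : ℂ) * w μ * ((k μ : ℂ) * w ν - (k ν : ℂ) * w μ) = 0 := by
    intro ν
    have hd : ∀ a b, dEx u 0 a b
        = (-Complex.I * E 0) * ((k a : ℂ) * w b - (k b : ℂ) * w a) := by
      intro a b; rw [key]; ring
    have hh : ∀ μ, hodge (dEx u 0) μ ν
        = (-Complex.I * E 0) * hodge (fun a b => (k a : ℂ) * w b - (k b : ℂ) * w a) μ ν := by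
      intro μ
      simp only [hodge, hd, Finset.mul_sum]
      exact Finset.sum_congr rfl fun a _ => Finset.sum_congr rfl fun b _ => by ring
    have h0 : ∑ μ : Fin 4, (gR μ μ : ℂ) * w μ * hodge (dEx u 0) μ ν = 0 := by
      have := hodge_contract (fun a => ((k a : ℝ) : ℂ)) w ν
      calc ∑ μ : Fin 4, (gR μ μ : ℂ) * w μ * hodge (dEx u 0) μ ν
          = (-Complex.I * E 0) * ∑ μ : Fin 4, (gR μ μ : ℂ) * w μ *
              hodge (fun a b => (k a : ℂ) * w b - (k b : ℂ) * w a) μ ν := by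
            rw [Finset.mul_sum]
            exact Finset.sum_congr rfl fun μ _ => by rw [hh]; ring
        _ = 0 := by rw [this, mul_zero]
    have h1 : ∑ μ : Fin 4, (gR μ μ : ℂ) * w μ * hodge (dEx u 0) μ ν
        = ((α : ℂ) * Complex.I * (-Complex.I * E 0)) *
          ∑ μ : Fin 4, (gR μ μ : ℂ) * w μ * ((k μ : ℂ) * w ν - (k ν : ℂ) * w μ) := by
      rw [Finset.mul_sum]
      refine Finset.sum_congr rfl fun μ _ => ?_
      rw [hpol, hd]; ring
    have hc : ((α : ℂ) * Complex.I * (-Complex.I * E 0)) ≠ 0 := by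
      apply mul_ne_zero (mul_ne_zero hα' Complex.I_ne_zero)
      exact mul_ne_zero (neg_ne_zero.mpr Complex.I_ne_zero) (hEne 0)
    have := h1.symm.trans h0
    exact (mul_eq_zero.mp this).resolve_left hc
  constructor
  · -- trace part
    intro x ν
    have hterm : ∀ lam, gR lam lam * Twave u x lam lam ν
        = (((gR lam lam : ℝ) : ℂ) * (u x lam * dEx u x lam ν)).re := by
      intro lam; rw [Twave, Complex.re_ofReal_mul]
    rw [Finset.sum_congr rfl fun lam _ => hterm lam, ← Complex.re_sum]
    have : ∑ lam : Fin 4, ((gR lam lam : ℝ) : ℂ) * (u x lam * dEx u x lam ν)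
        = (-Complex.I * E x * E x) * ∑ lam : Fin 4,
            (gR lam lam : ℂ) * w lam * ((k lam : ℂ) * w ν - (k ν : ℂ) * w lam) := by
      rw [Finset.mul_sum]
      refine Finset.sum_congr rfl fun lam _ => ?_
      rw [hu, key]; ring
    rw [this, hF, mul_zero, Complex.zero_re]
  · -- axial part
    intro x κ
    have hterm : ∀ l m n, gR l l * gR m m * gR n n * gR κ κ * Twave u x l m n * eps l m n κ
        = (((gR l l * gR m m * gR n n * gR κ κ * eps l m n κ : ℝ) : ℂ)
            * (u x l * dEx u x m n)).re := by
      intro l m n; rw [Twave, Complex.re_ofReal_mul]; ring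
    calc ∑ l : Fin 4, ∑ m : Fin 4, ∑ n : Fin 4,
          gR l l * gR m m * gR n n * gR κ κ * Twave u x l m n * eps l m n κ
        = (∑ l : Fin 4, ∑ m : Fin 4, ∑ n : Fin 4,
            ((gR l l * gR m m * gR n n * gR κ κ * eps l m n κ : ℝ) : ℂ)
              * (u x l * dEx u x m n)).re := by
          rw [Complex.re_sum]
          refine Finset.sum_congr rfl fun l _ => ?_
          rw [Complex.re_sum]
          refine Finset.sum_congr rfl fun m _ => ?_
          rw [Complex.re_sum]
          exact Finset.sum_congr rfl fun n _ => hterm l m n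
      _ = (((gR κ κ : ℂ) * (-Complex.I * E x * E x)) *
            ∑ l : Fin 4, ∑ m : Fin 4, ∑ n : Fin 4,
              ((gR l l : ℂ) * gR m m * gR n n) * w l *
                ((k m : ℂ) * w n - (k n : ℂ) * w m) * (eps l m n κ : ℝ)).re := by
          congr 1
          rw [Finset.mul_sum]
          refine Finset.sum_congr rfl fun l _ => ?_
          rw [Finset.mul_sum]
          refine Finset.sum_congr rfl fun m _ => ?_
          rw [Finset.mul_sum]
          refine Finset.sum_congr rfl fun n _ => ?_
          rw [hu, key]; push_cast; ring
      _ = 0 := by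
          rw [axial_alg (fun a => ((k a : ℝ) : ℂ)) w κ, mul_zero, Complex.zero_re]
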